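/- Let L be an almost-reductive Leibniz algebra over a field of characteristic zero. Then L is φ-free if and only if its nilradical N(L) is abelian. -/

import Mathlib

namespace LeibnizPaper

variable {F L : Type*} [Field F] [AddCommGroup L] [Module F L]

/-- The right Leibniz identity. -/
def IsRightLeibniz (br : L →ₗ[F] L →ₗ[F] L) : Prop :=
  ∀ x y z : L, br x (br y z) = br (br x y) z - br (br x z) y

/-- The left Leibniz identity. -/
def IsLeftLeibniz (br : L →ₗ[F] L →ₗ[F] L) : Prop :=
  ∀ x y z : L, br x (br y z) = br (br x y) z + br y (br x z)

/-- Symmetric Leibniz algebra: both identities together with `[[x,y],[x,y]] = 0`. -/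
def IsSymmetricLeibniz (br : L →ₗ[F] L →ₗ[F] L) : Prop :=
  IsRightLeibniz br ∧ IsLeftLeibniz br ∧ ∀ x y : L, br (br x y) (br x y) = 0

def IsSubalg (br : L →ₗ[F] L →ₗ[F] L) (U : Submodule F L) : Prop :=
  ∀ x ∈ U, ∀ y ∈ U, br x y ∈ U

def IsIdeal (br : L →ₗ[F] L →ₗ[F] L) (U : Submodule F L) : Prop :=
  ∀ x ∈ U, ∀ y : L, br x y ∈ U ∧ br y x ∈ U

/-- `U` is an ideal of the subalgebra `A`. -/
def IsIdealIn (br : L →ₗ[F] L →ₗ[F] L) (A U : Submodule F L) : Prop :=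
  U ≤ A ∧ ∀ x ∈ U, ∀ y ∈ A, br x y ∈ U ∧ br y x ∈ U

/-- The subspace spanned by all products of an element of `A` with an element of `B`. -/
def brSpan (br : L →ₗ[F] L →ₗ[F] L) (A B : Submodule F L) : Submodule F L :=
  Submodule.span F {z | ∃ a ∈ A, ∃ b ∈ B, z = br a b}

def derSeries (br : L →ₗ[F] L →ₗ[F] L) (U : Submodule F L) : ℕ → Submodule F L
  | 0 => U
  | n+1 => brSpan br (derSeries br U n) (derSeries br U n)

def lcSeries (br : L →ₗ[F] L →ₗ[F] L) (U : Submodule F L) : ℕ → Submodule F L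
  | 0 => U
  | n+1 => brSpan br (lcSeries br U n) U

def IsSolvable (br : L →ₗ[F] L →ₗ[F] L) (U : Submodule F L) : Prop :=
  ∃ n, derSeries br U n = ⊥

def IsNilpotentSub (br : L →ₗ[F] L →ₗ[F] L) (U : Submodule F L) : Prop :=
  ∃ n, lcSeries br U n = ⊥

/-- `G` is the radical (largest solvable ideal). -/
def IsRadical (br : L →ₗ[F] L →ₗ[F] L) (G : Submodule F L) : Prop :=
  IsIdeal br G ∧ IsSolvable br G ∧ ∀ J, IsIdeal br J → IsSolvable br J → J ≤ G

/-- `G` is the radical of the subalgebra `A`. -/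
def IsRadicalIn (br : L →ₗ[F] L →ₗ[F] L) (A G : Submodule F L) : Prop :=
  IsIdealIn br A G ∧ IsSolvable br G ∧ ∀ J, IsIdealIn br A J → IsSolvable br J → J ≤ G

/-- `N` is the nilradical (largest nilpotent ideal). -/
def IsNilradical (br : L →ₗ[F] L →ₗ[F] L) (N : Submodule F L) : Prop :=
  IsIdeal br N ∧ IsNilpotentSub br N ∧ ∀ J, IsIdeal br J → IsNilpotentSub br J → J ≤ N

/-- The subalgebra `S` is semisimple: it has no nonzero solvable ideals. -/
def IsSemisimpleIn (br : L →ₗ[F] L →ₗ[F] L) (S : Submodule F L) : Prop :=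
  ∀ J, IsIdealIn br S J → IsSolvable br J → J = ⊥

/-- The Leibniz kernel `I`, the span of all squares. -/
def kernelIdeal (br : L →ₗ[F] L →ₗ[F] L) : Submodule F L :=
  Submodule.span F {y | ∃ x, y = br x x}

def IsMaxSubalg (br : L →ₗ[F] L →ₗ[F] L) (M : Submodule F L) : Prop :=
  IsSubalg br M ∧ M ≠ ⊤ ∧ ∀ M', IsSubalg br M' → M ≤ M' → M' ≠ ⊤ → M' = M

/-- `φ(L) = 0`: every ideal contained in all maximal subalgebras is trivial. -/
def IsPhiFree (br : L →ₗ[F] L →ₗ[F] L) : Prop :=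
  ∀ J, IsIdeal br J → (∀ M, IsMaxSubalg br M → J ≤ M) → J = ⊥

/-- `P` is the Frattini ideal: the largest ideal contained in every maximal subalgebra. -/
def IsFrattiniIdeal (br : L →ₗ[F] L →ₗ[F] L) (P : Submodule F L) : Prop :=
  IsIdeal br P ∧ (∀ M, IsMaxSubalg br M → P ≤ M) ∧
    ∀ J, IsIdeal br J → (∀ M, IsMaxSubalg br M → J ≤ M) → J ≤ P

/-- `A` is invariant under left and right multiplication by elements of `Sg`. -/
def IsSubBimodule (br : L →ₗ[F] L →ₗ[F] L) (Sg A : Submodule F L) : Prop :=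
  ∀ a ∈ A, ∀ s ∈ Sg, br a s ∈ A ∧ br s a ∈ A

/-- `L = N ∔ Sg` with `Sg` a Lie subalgebra and the nilradical `N` a completely
reducible `Sg`-bimodule. -/
def IsAlmostReductive (br : L →ₗ[F] L →ₗ[F] L) (N Sg : Submodule F L) : Prop :=
  IsNilradical br N ∧ IsSubalg br Sg ∧ (∀ x ∈ Sg, br x x = 0) ∧
    N ⊓ Sg = ⊥ ∧ N ⊔ Sg = ⊤ ∧
    ∀ A ≤ N, IsSubBimodule br Sg A → ∃ B ≤ N, IsSubBimodule br Sg B ∧ A ⊓ B = ⊥ ∧ A ⊔ B = N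

def IsAbelianSub (br : L →ₗ[F] L →ₗ[F] L) (U : Submodule F L) : Prop :=
  ∀ x ∈ U, ∀ y ∈ U, br x y = 0

def IsMinAbelianIdeal (br : L →ₗ[F] L →ₗ[F] L) (A : Submodule F L) : Prop :=
  IsIdeal br A ∧ A ≠ ⊥ ∧ IsAbelianSub br A ∧
    ∀ B, IsIdeal br B → B ≤ A → B ≠ ⊥ → B = A

/-- The abelian socle: the sum of the minimal abelian ideals. -/
def abelianSocle (br : L →ₗ[F] L →ₗ[F] L) : Submodule F L :=
  sSup {A | IsMinAbelianIdeal br A}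

/-- An algebra is almost algebraic if the algebra of its right multiplication operators
contains the semisimple and nilpotent Jordan components of each of its elements. -/
def IsAlmostAlgebraicBr (br : L →ₗ[F] L →ₗ[F] L) : Prop :=
  ∀ f ∈ Set.range br.flip, ∃ s ∈ Set.range br.flip, ∃ n ∈ Set.range br.flip,
    f = s + n ∧ Module.End.IsSemisimple s ∧ IsNilpotent n ∧ Commute s n

/-- Every nilpotent subalgebra is abelian. -/
def IsAAlgebra (br : L →ₗ[F] L →ₗ[F] L) : Prop :=
  ∀ U, IsSubalg br U → IsNilpotentSub br U → IsAbelianSub br U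

/-- The commutator bracket, as a bilinear map on an associative algebra. -/
def commBr (F E : Type*) [Field F] [Ring E] [Algebra F E] : E →ₗ[F] E →ₗ[F] E :=
  LinearMap.mul F E - (LinearMap.mul F E).flip


section AuxLemmas

variable (br : L →ₗ[F] L →ₗ[F] L)

theorem mem_brSpan {A B : Submodule F L} {a b : L} (ha : a ∈ A) (hb : b ∈ B) :
    br a b ∈ brSpan br A B :=
  Submodule.subset_span ⟨a, ha, b, hb, rfl⟩

theorem brSpan_le {A B X : Submodule F L} (hle : ∀ a ∈ A, ∀ b ∈ B, br a b ∈ X) :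
    brSpan br A B ≤ X := by
  refine Submodule.span_le.mpr ?_
  rintro z ⟨a, ha, b, hb, rfl⟩
  exact hle a ha b hb

theorem brSpan_mono {A B A' B' : Submodule F L} (hA : A ≤ A') (hB : B ≤ B') :
    brSpan br A B ≤ brSpan br A' B' :=
  brSpan_le br fun a ha b hb => mem_brSpan br (hA ha) (hB hb)

theorem brSpan_right_le {A B C X : Submodule F L}
    (hcl : ∀ a ∈ A, ∀ b ∈ B, ∀ c ∈ C, br a (br b c) ∈ X) :
    brSpan br A (brSpan br B C) ≤ X := by
  refine brSpan_le br fun a ha u hu => ?_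
  induction hu using Submodule.span_induction with
  | mem z hz => obtain ⟨b, hb, c, hc, rfl⟩ := hz; exact hcl a ha b hb c hc
  | zero => simpa using X.zero_mem
  | add u v hu hv pu pv => simpa [map_add] using X.add_mem pu pv
  | smul t u hu pu => simpa [map_smul] using X.smul_mem t pu

theorem lcSeries_succ_le {U : Submodule F L} (hU : IsSubalg br U) :
    ∀ n, lcSeries br U (n + 1) ≤ lcSeries br U n
  | 0 => brSpan_le br hU
  | n+1 => brSpan_mono br (lcSeries_succ_le hU n) le_rfl

theorem lcSeries_antitone {U : Submodule F L} (hU : IsSubalg br U) {n m : ℕ} (hnm : n ≤ m) :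
    lcSeries br U m ≤ lcSeries br U n := by
  induction hnm with
  | refl => exact le_rfl
  | step h ih => exact (lcSeries_succ_le br hU _).trans (by assumption)

theorem brSpan_lcSeries (h : IsRightLeibniz br) {U : Submodule F L} (hU : IsSubalg br U) :
    ∀ j i, brSpan br (lcSeries br U i) (lcSeries br U j) ≤ lcSeries br U (i + j + 1)
  | 0, i => le_of_eq rfl
  | j+1, i => by
    refine brSpan_right_le br ?_
    intro a ha b hb c hc
    rw [h a b c]
    refine Submodule.sub_mem _ ?_ ?_
    · have h1 : br a b ∈ lcSeries br U (i + j + 1) :=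
        brSpan_lcSeries h hU j i (mem_brSpan br ha hb)
      exact mem_brSpan (B := U) br h1 hc
    · have h2 : br a c ∈ lcSeries br U (i + 1) := mem_brSpan (B := U) br ha hc
      have h3 := brSpan_lcSeries h hU j (i+1) (mem_brSpan br h2 hb)
      have he : i + 1 + j + 1 = i + (j + 1) + 1 := by omega
      rwa [he] at h3

theorem isIdeal_brSpan (h : IsRightLeibniz br) {N : Submodule F L} (hN : IsIdeal br N) :
    IsIdeal br (brSpan br N N) := by
  intro u hu y
  induction hu using Submodule.span_induction with
  | mem z hz =>
    obtain ⟨a, ha, b, hb, rfl⟩ := hz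
    constructor
    · have e := h a b y
      rw [eq_sub_iff_add_eq] at e
      rw [← e]
      exact Submodule.add_mem _ (mem_brSpan br ha (hN b hb y).1)
        (mem_brSpan br (hN a ha y).1 hb)
    · rw [h y a b]
      exact Submodule.sub_mem _ (mem_brSpan br (hN a ha y).2 hb)
        (mem_brSpan br (hN b hb y).2 ha)
  | zero =>
    constructor
    · have e : br (0 : L) y = 0 := by simp
      rw [e]; exact Submodule.zero_mem _
    · have e : br y (0 : L) = 0 := by simp
      rw [e]; exact Submodule.zero_mem _
  | add u v hu hv pu pv =>
    constructor
    · have e : br (u + v) y = br u y + br v y := by simp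
      rw [e]; exact Submodule.add_mem _ pu.1 pv.1
    · have e : br y (u + v) = br y u + br y v := by simp
      rw [e]; exact Submodule.add_mem _ pu.2 pv.2
  | smul t u hu pu =>
    constructor
    · have e : br (t • u) y = t • br u y := by simp
      rw [e]; exact Submodule.smul_mem _ t pu.1
    · have e : br y (t • u) = t • br y u := by simp
      rw [e]; exact Submodule.smul_mem _ t pu.2

theorem exists_maxSubalg_le [FiniteDimensional F L] {U : Submodule F L}
    (hU : IsSubalg br U) (hUtop : U ≠ ⊤) : ∃ M, IsMaxSubalg br M ∧ U ≤ M := by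
  obtain ⟨k, hk⟩ : ∃ k, Module.finrank F L - Module.finrank F U = k := ⟨_, rfl⟩
  induction k using Nat.strong_induction_on generalizing U with
  | _ k ih =>
    by_cases hmax : IsMaxSubalg br U
    · exact ⟨U, hmax, le_rfl⟩
    · have hnot : ¬ ∀ M', IsSubalg br M' → U ≤ M' → M' ≠ ⊤ → M' = U := fun hc =>
        hmax ⟨hU, hUtop, hc⟩
      push_neg at hnot
      obtain ⟨U', hU', hle, hU'top, hne⟩ := hnot
      have hlt : U < U' := lt_of_le_of_ne hle (Ne.symm hne)
      have hrk : Module.finrank F U < Module.finrank F U' :=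
        Submodule.finrank_lt_finrank_of_lt hlt
      have hrk2 : Module.finrank F U' ≤ Module.finrank F L := Submodule.finrank_le U'
      obtain ⟨M, hM, hle'⟩ := ih (Module.finrank F L - Module.finrank F U')
        (by omega) hU' hU'top rfl
      exact ⟨M, hM, hle.trans hle'⟩

theorem abelian_of_phiFree [FiniteDimensional F L] (h : IsRightLeibniz br)
    {N : Submodule F L} (hNid : IsIdeal br N) (hNnil : IsNilpotentSub br N)
    (hphi : IsPhiFree br) : IsAbelianSub br N := by
  have hNsub : IsSubalg br N := fun x hx y _ => (hNid x hx y).1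
  have hAN : brSpan br N N ≤ N := brSpan_le br fun a ha b hb => (hNid a ha b).1
  have hAid : IsIdeal br (brSpan br N N) := isIdeal_brSpan br h hNid
  have hAle : ∀ M, IsMaxSubalg br M → brSpan br N N ≤ M := by
    intro M hM
    by_cases hNM : N ≤ M
    · exact hAN.trans hNM
    have hMA_sub : IsSubalg br (M ⊔ brSpan br N N) := by
      intro p hp q hq
      obtain ⟨c, hc, u, hu, rfl⟩ := Submodule.mem_sup.mp hp
      obtain ⟨c', hc', u', hu', rfl⟩ := Submodule.mem_sup.mp hq
      have expand : br (c + u) (c' + u') =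
          br c c' + (br c u' + br u c' + br u u') := by
        simp only [map_add, LinearMap.add_apply]; abel
      rw [expand]
      refine Submodule.add_mem _ (Submodule.mem_sup_left (hM.1 c hc c' hc'))
        (Submodule.mem_sup_right ?_)
      exact Submodule.add_mem _ (Submodule.add_mem _ (hAid u' hu' c).2 (hAid u hu c').1)
        (hAid u hu u').1
    have hMAne : M ⊔ brSpan br N N ≠ ⊤ := by
      intro htop
      have hNle : N ≤ (M ⊓ N) ⊔ brSpan br N N := by
        have hmod : (brSpan br N N ⊔ M) ⊓ N = brSpan br N N ⊔ (M ⊓ N) :=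
          sup_inf_assoc_of_le _ hAN
        have h1 : (brSpan br N N ⊔ M) = ⊤ := by rw [sup_comm]; exact htop
        rw [h1, top_inf_eq, sup_comm _ (M ⊓ N)] at hmod
        exact le_of_eq hmod
      have key : ∀ k, N ≤ (M ⊓ N) ⊔ lcSeries br N (k + 1) := by
        intro k
        induction k with
        | zero => exact hNle
        | succ k ihk =>
          refine le_trans hNle (sup_le le_sup_left ?_)
          have hMN_sub : IsSubalg br (M ⊓ N) := by
            intro p hp q hq
            rw [Submodule.mem_inf] at hp hq ⊢
            exact ⟨hM.1 p hp.1 q hq.1, hNsub p hp.2 q hq.2⟩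
          refine le_trans (brSpan_mono br ihk ihk) ?_
          refine brSpan_le br ?_
          intro a ha b hb
          obtain ⟨c, hc, u, hu, rfl⟩ := Submodule.mem_sup.mp ha
          obtain ⟨c', hc', u', hu', rfl⟩ := Submodule.mem_sup.mp hb
          have expand : br (c + u) (c' + u') =
              br c c' + (br c u' + br u c' + br u u') := by
            simp only [map_add, LinearMap.add_apply]; abel
          rw [expand]
          refine Submodule.add_mem _ (Submodule.mem_sup_left (hMN_sub c hc c' hc'))
            (Submodule.mem_sup_right ?_)
          refine Submodule.add_mem _ (Submodule.add_mem _ ?_ ?_) ?_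
          · refine lcSeries_antitone br hNsub (show k + 2 ≤ 0 + (k + 1) + 1 by omega) ?_
            exact brSpan_lcSeries br h hNsub (k + 1) 0
              (mem_brSpan br ((Submodule.mem_inf.mp hc).2) hu')
          · exact mem_brSpan (B := N) br hu ((Submodule.mem_inf.mp hc').2)
          · refine lcSeries_antitone br hNsub (show k + 2 ≤ (k + 1) + (k + 1) + 1 by omega) ?_
            exact brSpan_lcSeries br h hNsub (k + 1) (k + 1) (mem_brSpan br hu hu')
      obtain ⟨n, hn⟩ := hNnil
      have h1 : N ≤ (M ⊓ N) ⊔ lcSeries br N (n + 1) := key n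
      have h2 : lcSeries br N (n + 1) = ⊥ :=
        le_bot_iff.mp ((lcSeries_succ_le br hNsub n).trans hn.le)
      rw [h2, sup_bot_eq] at h1
      exact hNM (h1.trans inf_le_left)
    have hMeq := hM.2.2 (M ⊔ brSpan br N N) hMA_sub le_sup_left hMAne
    rw [← hMeq]
    exact le_sup_right
  have hAbot : brSpan br N N = ⊥ := hphi _ hAid hAle
  intro x hx y hy
  have hm : br x y ∈ brSpan br N N := mem_brSpan br hx hy
  rw [hAbot] at hm
  simpa using hm

theorem flip_nilpotent_of_le_max [FiniteDimensional F L] (h : IsRightLeibniz br)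
    {J : Submodule F L} (hJ : IsIdeal br J)
    (hJmax : ∀ M, IsMaxSubalg br M → J ≤ M) {x : L} (hx : x ∈ J) :
    IsNilpotent (br.flip x) := by
  set d : Module.End F L := br.flip x with hd
  have hpow : ∀ (k : ℕ) (v : L), (d ^ (k + 1)) v = d ((d ^ k) v) := by
    intro k v; rw [pow_succ']; rfl
  have hder : ∀ a b : L, d (br a b) = br (d a) b + br a (d b) := by
    intro a b
    have e := h a b x
    rw [eq_sub_iff_add_eq] at e
    show br (br a b) x = br (br a x) b + br a (br b x)
    rw [← e, add_comm]
  obtain ⟨n₀, hn₀⟩ := Filter.eventually_atTop.mp d.eventually_isCompl_ker_pow_range_pow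
  obtain ⟨m, hm1, hm2, hm3⟩ : ∃ m, IsCompl (LinearMap.ker (d ^ m)) (LinearMap.range (d ^ m)) ∧
      Module.finrank F L ≤ m ∧ 1 ≤ m :=
    ⟨max n₀ (max (Module.finrank F L) 1), hn₀ _ (le_max_left _ _),
      le_trans (le_max_left _ _) (le_max_right _ _),
      le_trans (le_max_right _ _) (le_max_right _ _)⟩
  have hker2 : LinearMap.ker (d ^ (2 * m)) = LinearMap.ker (d ^ m) := by
    rw [Module.End.ker_pow_eq_ker_pow_finrank_of_le (by omega),
      Module.End.ker_pow_eq_ker_pow_finrank_of_le hm2]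
  have hsub : IsSubalg br (LinearMap.ker (d ^ m)) := by
    intro a ha b hb
    rw [LinearMap.mem_ker] at ha hb
    rw [← hker2, LinearMap.mem_ker]
    have claim : ∀ n, (d ^ n) (br a b) ∈
        Submodule.span F {z | ∃ i j, i + j = n ∧ z = br ((d ^ i) a) ((d ^ j) b)} := by
      intro n
      induction n with
      | zero => exact Submodule.subset_span ⟨0, 0, rfl, by simp⟩
      | succ n ihn =>
        rw [hpow]
        have hmapsto : ∀ z ∈ Submodule.span F
            {z | ∃ i j, i + j = n ∧ z = br ((d ^ i) a) ((d ^ j) b)}, d z ∈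
            Submodule.span F {z | ∃ i j, i + j = n + 1 ∧ z = br ((d ^ i) a) ((d ^ j) b)} := by
          intro z hz
          induction hz using Submodule.span_induction with
          | mem z hz =>
            obtain ⟨i, j, hij, rfl⟩ := hz
            rw [hder]
            refine Submodule.add_mem _ ?_ ?_
            · refine Submodule.subset_span ⟨i + 1, j, by omega, ?_⟩
              rw [hpow]
            · refine Submodule.subset_span ⟨i, j + 1, by omega, ?_⟩
              rw [hpow]
          | zero => rw [map_zero]; exact Submodule.zero_mem _
          | add u v hu hv pu pv => rw [map_add]; exact Submodule.add_mem _ pu pv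
          | smul t u hu pu => rw [map_smul]; exact Submodule.smul_mem _ t pu
        exact hmapsto _ ihn
    have hbot : Submodule.span F
        {z | ∃ i j, i + j = 2 * m ∧ z = br ((d ^ i) a) ((d ^ j) b)} ≤ ⊥ := by
      rw [Submodule.span_le]
      rintro z ⟨i, j, hij, rfl⟩
      simp only [SetLike.mem_coe, Submodule.mem_bot]
      rcases le_or_gt m i with hi | hi
      · have hz : (d ^ i) a = 0 := by
          have hsplit : d ^ i = d ^ (i - m) * d ^ m := by
            rw [← pow_add]; congr 1; omega
          rw [hsplit, Module.End.mul_apply, ha, map_zero]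
        rw [hz]; simp
      · have hj : m ≤ j := by omega
        have hz : (d ^ j) b = 0 := by
          have hsplit : d ^ j = d ^ (j - m) * d ^ m := by
            rw [← pow_add]; congr 1; omega
          rw [hsplit, Module.End.mul_apply, hb, map_zero]
        rw [hz]; simp
    simpa using hbot (claim (2 * m))
  have hrange : LinearMap.range (d ^ m) ≤ J := by
    rintro _ ⟨y, rfl⟩
    obtain ⟨m', rfl⟩ : ∃ m', m = m' + 1 := ⟨m - 1, by omega⟩
    rw [hpow]
    exact (hJ x hx ((d ^ m') y)).2
  have htop : LinearMap.ker (d ^ m) ⊔ J = ⊤ := by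
    have hc := hm1.codisjoint
    rw [codisjoint_iff] at hc
    exact top_unique (by rw [← hc]; exact sup_le_sup_left hrange _)
  have hkertop : LinearMap.ker (d ^ m) = ⊤ := by
    by_contra hne
    obtain ⟨M, hM, hle⟩ := exists_maxSubalg_le br hsub hne
    have : (⊤ : Submodule F L) ≤ M := by
      rw [← htop]; exact sup_le hle (hJmax M hM)
    exact hM.2.1 (top_unique this)
  exact ⟨m, by rwa [← LinearMap.ker_eq_top]⟩

attribute [local instance] LieRing.ofAssociativeRing

theorem isNilpotentSub_of_flip_nilpotent [FiniteDimensional F L] (h : IsRightLeibniz br)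
    {J : Submodule F L} (hJsub : IsSubalg br J)
    (hnil : ∀ x ∈ J, IsNilpotent (br.flip x)) : IsNilpotentSub br J := by
  set ρ : L →ₗ[F] Module.End F L := br.flip with hρdef
  have hbrkt : ∀ a b : L, ⁅ρ a, ρ b⁆ = ρ (br b a) := by
    intro a b
    ext z
    show (ρ a * ρ b - ρ b * ρ a) z = br z (br b a)
    have e := h z b a
    simp only [LinearMap.sub_apply, Module.End.mul_apply]
    rw [e]
    rfl
  set g : LieSubalgebra F (Module.End F L) :=
    { toSubmodule := J.map ρ
      lie_mem' := by
        rintro x y hx hy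
        obtain ⟨a, ha, rfl⟩ := hx
        obtain ⟨b, hb, rfl⟩ := hy
        rw [hbrkt]
        exact Submodule.mem_map_of_mem (hJsub b hb a ha) } with hgdef
  haveI : FiniteDimensional F g := by
    have : FiniteDimensional F (J.map ρ) := inferInstance
    exact this
  have hx : ∀ x : g, IsNilpotent (LieModule.toEnd F g L x) := by
    rintro ⟨f, hf⟩
    obtain ⟨a, ha, rfl⟩ := hf
    obtain ⟨n, hn⟩ := hnil a ha
    refine ⟨n, ?_⟩
    have he : LieModule.toEnd F g L ⟨ρ a, Submodule.mem_map_of_mem ha⟩ = ρ a :=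
      LinearMap.ext fun m => rfl
    rw [he]
    exact hn
  have heng : LieModule.IsNilpotent g L :=
    LieAlgebra.isEngelian_of_isNoetherian L hx
  obtain ⟨k, hk⟩ := (LieModule.isNilpotent_iff F g L).mp heng
  have htrans : ∀ n, lcSeries br J (n + 1) ≤
      LieSubmodule.toSubmodule (LieModule.lowerCentralSeries F g L n) := by
    intro n
    induction n with
    | zero =>
      rw [LieModule.lowerCentralSeries_zero]
      exact le_top
    | succ n ihn =>
      refine brSpan_le br ?_
      intro a ha x hx'
      have hmem : ρ x ∈ g := Submodule.mem_map_of_mem hx'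
      have heq : br a x = ⁅(⟨ρ x, hmem⟩ : g), a⁆ := rfl
      rw [heq, LieModule.lowerCentralSeries_succ]
      exact LieSubmodule.lie_mem_lie (LieSubmodule.mem_top _) (ihn ha)
  refine ⟨k + 1, ?_⟩
  have hfin := (htrans k).trans (by rw [hk])
  simpa using le_bot_iff.mp (by simpa using hfin)

theorem phiFree_of_abelian [FiniteDimensional F L] (h : IsRightLeibniz br)
    {N Sg : Submodule F L} (har : IsAlmostReductive br N Sg)
    (hab : IsAbelianSub br N) : IsPhiFree br := by
  obtain ⟨hNrad, hSsub, _hSalt, hNSinf, hNSsup, hcr⟩ := har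
  intro J hJ hJmax
  have hJsub : IsSubalg br J := fun a ha b _ => (hJ a ha b).1
  have hnil : ∀ x ∈ J, IsNilpotent (br.flip x) := fun x hx =>
    flip_nilpotent_of_le_max br h hJ hJmax hx
  have hJnilp : IsNilpotentSub br J := isNilpotentSub_of_flip_nilpotent br h hJsub hnil
  have hJN : J ≤ N := hNrad.2.2 J hJ hJnilp
  have hbi : IsSubBimodule br Sg J := fun a ha s _ => ⟨(hJ a ha s).1, (hJ a ha s).2⟩
  obtain ⟨B, hBN, hBbi, hJBinf, hJBsup⟩ := hcr J hJN hbi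
  by_contra hJne
  have hsub : IsSubalg br (B ⊔ Sg) := by
    intro p hp q hq
    obtain ⟨b, hb, s, hs, rfl⟩ := Submodule.mem_sup.mp hp
    obtain ⟨b', hb', s', hs', rfl⟩ := Submodule.mem_sup.mp hq
    have expand : br (b + s) (b' + s') =
        br b b' + (br b s' + br s b') + br s s' := by
      simp only [map_add, LinearMap.add_apply]; abel
    rw [expand, hab b (hBN hb) b' (hBN hb'), zero_add]
    refine Submodule.add_mem _ (Submodule.mem_sup_left ?_) (Submodule.mem_sup_right ?_)
    · exact Submodule.add_mem _ (hBbi b hb s' hs').1 (hBbi b' hb' s hs).2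
    · exact hSsub s hs s' hs'
  have hne : B ⊔ Sg ≠ ⊤ := by
    intro htop
    have hmod : (B ⊔ Sg) ⊓ N = B ⊔ (Sg ⊓ N) := sup_inf_assoc_of_le _ hBN
    rw [htop, top_inf_eq, inf_comm Sg N, hNSinf, sup_bot_eq] at hmod
    apply hJne
    have h1 : J ≤ B := hmod ▸ hJN
    have h2 : J ≤ J ⊓ B := le_inf le_rfl h1
    rw [hJBinf] at h2
    exact le_bot_iff.mp h2
  obtain ⟨M, hM, hle⟩ := exists_maxSubalg_le br hsub hne
  have hNM : N ≤ M := by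
    rw [← hJBsup]
    exact sup_le (hJmax M hM) (le_sup_left.trans hle)
  have htopM : (⊤ : Submodule F L) ≤ M := by
    rw [← hNSsup]
    exact sup_le hNM (le_sup_right.trans hle)
  exact hM.2.1 (top_unique htopM)

end AuxLemmas

theorem almostReductive_phiFree_iff [CharZero F] [FiniteDimensional F L]
    (br : L →ₗ[F] L →ₗ[F] L) (h : IsRightLeibniz br)
    (N Sg : Submodule F L) (har : IsAlmostReductive br N Sg) :
    IsPhiFree br ↔ IsAbelianSub br N := by
  constructor
  · intro hphi
    exact abelian_of_phiFree br h har.1.1 har.1.2.1 hphi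
  · intro hab
    exact phiFree_of_abelian br h har hab

end LeibnizPaper
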